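/- arXiv:2502.21099 — 8 statements merged into one kernel-verified Lean document; each statement's English description precedes it below -/
import Mathlib

section
/- For all real x, y ≥ 0 with y > x, the function value x/√y + 2√(y − x) − 2√y is ≤ 0. -/
theorem one_step_sqrt_estimate (x y : ℝ) (hx : 0 ≤ x) (hxy : x < y) :
    x / Real.sqrt y + 2 * Real.sqrt (y - x) - 2 * Real.sqrt y ≤ 0 := by
  have hy : 0 < y := lt_of_le_of_lt hx hxy
  set a := Real.sqrt y with ha
  set b := Real.sqrt (y - x) with hb
  have ha0 : 0 < a := Real.sqrt_pos.mpr hy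
  have hb0 : 0 ≤ b := Real.sqrt_nonneg _
  have ha2 : a ^ 2 = y := Real.sq_sqrt hy.le
  have hb2 : b ^ 2 = y - x := Real.sq_sqrt (by linarith)
  have hxab : x = a ^ 2 - b ^ 2 := by linarith
  have key : x / a + 2 * b - 2 * a = -((a - b) ^ 2 / a) := by
    rw [hxab]; field_simp; ring
  rw [key, neg_nonpos]
  positivity
end

section
/- Let c > 0, {A_i}_{i=0}^∞ a nonnegative sequence, and S_t = Σ_{i=0}^t A_i. Then Σ_{i=0}^t A_i / (c + S_i) ≤ log(1 + S_t/c). -/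
open Finset Real

theorem div_add_le_log_add_sub_log {a b : ℝ} (ha : 0 < a) (hb : 0 ≤ b) :
    b / (a + b) ≤ log (a + b) - log a := by
  have hab : 0 < a + b := by linarith
  calc b / (a + b) = 1 - ((a + b) / a)⁻¹ := by field_simp; ring
    _ ≤ log ((a + b) / a) := one_sub_inv_le_log_of_pos (by positivity)
    _ = log (a + b) - log a := log_div hab.ne' ha.ne'

/-- Each term is bounded by the increment of `k ↦ log (c + ∑_{j<k} A j)`, and these telescope. -/
theorem sum_div_add_partial_sum_le_log_sub_log {c : ℝ} (hc : 0 < c) {A : ℕ → ℝ}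
    (hA : ∀ i, 0 ≤ A i) (n : ℕ) :
    ∑ i ∈ range n, A i / (c + ∑ j ∈ range (i + 1), A j) ≤
      log (c + ∑ i ∈ range n, A i) - log c := by
  have hpos : ∀ k, 0 < c + ∑ j ∈ range k, A j := fun k =>
    add_pos_of_pos_of_nonneg hc (sum_nonneg fun j _ => hA j)
  calc ∑ i ∈ range n, A i / (c + ∑ j ∈ range (i + 1), A j)
      ≤ ∑ i ∈ range n,
          (log (c + ∑ j ∈ range (i + 1), A j) - log (c + ∑ j ∈ range i, A j)) :=
        sum_le_sum fun i _ => by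
          rw [sum_range_succ, ← add_assoc]
          exact div_add_le_log_add_sub_log (hpos i) (hA i)
    _ = log (c + ∑ i ∈ range n, A i) - log c := by
        rw [sum_range_sub (fun k => log (c + ∑ j ∈ range k, A j))]
        simp

theorem adagrad_log_sum_bound (c : ℝ) (hc : 0 < c) (A : ℕ → ℝ) (hA : ∀ i, 0 ≤ A i)
    (S : ℕ → ℝ) (hS : ∀ t, S t = ∑ i ∈ Finset.range (t + 1), A i) :
    ∀ t, ∑ i ∈ Finset.range (t + 1), A i / (c + S i) ≤ Real.log (1 + S t / c) := by
  intro t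
  have hSt : 0 < c + S t := by
    rw [hS]; exact add_pos_of_pos_of_nonneg hc (sum_nonneg fun j _ => hA j)
  have hlog : log (1 + S t / c) = log (c + S t) - log c := by
    rw [← log_div hSt.ne' hc.ne', add_div, div_self hc.ne']
  rw [hlog]
  simp only [hS]
  exact sum_div_add_partial_sum_le_log_sub_log hc hA (t + 1)
end

section
/- Combining the two bounds: for c > 0, p ∈ (0,1], a nonnegative sequence {A_i} with partial sums S_t = Σ_{i=0}^t A_i, one has Σ_{i=0}^t A_i/(c + S_i) ≤ (c + S_t)^p / (p c^p) − 1. -/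
/-!
With `u i = c + ∑_{j<i} A j` one has `A i = u (i+1) - u i` and `c + S i = u (i+1)`. For
`0 < y ≤ x`, `1 - y/x ≤ log (x/y) = p⁻¹ log ((x/y)^p) ≤ p⁻¹ ((x/y)^p - 1)`, so each summand is at
most `(u (i+1)^p - u i^p) / (p c^p)`, and these bounds telescope to `((c + S t)^p - c^p) / (p c^p)`.
Finally `p ≤ 1` gives `1/p ≥ 1`.
-/

open Finset Real

lemma sub_div_le_rpow_sub_div {p x y : ℝ} (hp : 0 < p) (hy : 0 < y) (hxy : y ≤ x) :
    (x - y) / x ≤ (x ^ p - y ^ p) / (p * y ^ p) := by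
  have hx : 0 < x := hy.trans_le hxy
  have hxy' : 0 < x / y := div_pos hx hy
  calc (x - y) / x = 1 - (x / y)⁻¹ := by field_simp
    _ ≤ log (x / y) := one_sub_inv_le_log_of_pos hxy'
    _ = log ((x / y) ^ p) / p := by rw [log_rpow hxy']; field_simp
    _ ≤ ((x / y) ^ p - 1) / p := by gcongr; exact log_le_sub_one_of_pos (by positivity)
    _ = (x ^ p - y ^ p) / (p * y ^ p) := by
      have : 0 < y ^ p := rpow_pos_of_pos hy p
      rw [div_rpow hx.le hy.le]
      field_simp

lemma sum_sub_div_le_rpow_sub_div {u : ℕ → ℝ} (hu : Monotone u) (hu0 : 0 < u 0) {p : ℝ}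
    (hp : 0 < p) (n : ℕ) :
    ∑ i ∈ range n, (u (i + 1) - u i) / u (i + 1) ≤ (u n ^ p - u 0 ^ p) / (p * u 0 ^ p) := by
  have hpos : ∀ i, 0 < u i := fun i => hu0.trans_le (hu (Nat.zero_le i))
  calc ∑ i ∈ range n, (u (i + 1) - u i) / u (i + 1)
      ≤ ∑ i ∈ range n, (u (i + 1) ^ p - u i ^ p) / (p * u 0 ^ p) := by
        refine sum_le_sum fun i _ => (sub_div_le_rpow_sub_div hp (hpos i) (hu i.le_succ)).trans ?_
        have hnum : 0 ≤ u (i + 1) ^ p - u i ^ p :=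
          sub_nonneg.2 (rpow_le_rpow (hpos i).le (hu i.le_succ) hp.le)
        gcongr
        exact hu (Nat.zero_le i)
    _ = (u n ^ p - u 0 ^ p) / (p * u 0 ^ p) := by rw [← sum_div, sum_range_sub (fun i => u i ^ p)]

theorem adagrad_rpow_sum_bound (c p : ℝ) (hc : 0 < c) (hp0 : 0 < p) (hp1 : p ≤ 1)
    (A : ℕ → ℝ) (hA : ∀ i, 0 ≤ A i)
    (S : ℕ → ℝ) (hS : ∀ t, S t = ∑ i ∈ Finset.range (t + 1), A i) :
    ∀ t, ∑ i ∈ Finset.range (t + 1), A i / (c + S i)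
      ≤ (c + S t) ^ p / (p * c ^ p) - 1 := by
  intro t
  set u : ℕ → ℝ := fun i => c + ∑ j ∈ range i, A j with hu_def
  have hu_succ : ∀ i, u (i + 1) = c + S i := fun i => by simp only [hu_def, hS]
  have hu_step : ∀ i, u (i + 1) - u i = A i := fun i => by
    simp only [hu_def, sum_range_succ]; ring
  have hu_mono : Monotone u :=
    monotone_nat_of_le_succ fun i => sub_nonneg.1 ((hu_step i).symm ▸ hA i)
  have hu0 : u 0 = c := by simp [hu_def]
  have htele := sum_sub_div_le_rpow_sub_div hu_mono (hu0 ▸ hc) hp0 (t + 1)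
  simp only [hu_step, hu0] at htele
  simp only [hu_succ] at htele
  have hp_inv : 1 ≤ 1 / p := by rw [le_div_iff₀ hp0]; linarith
  calc ∑ i ∈ range (t + 1), A i / (c + S i)
      ≤ ((c + S t) ^ p - c ^ p) / (p * c ^ p) := htele
    _ = (c + S t) ^ p / (p * c ^ p) - 1 / p := by field_simp
    _ ≤ (c + S t) ^ p / (p * c ^ p) - 1 := by linarith
end

section
/- Let {Z_t}_{t=0}^∞ be a nonnegative sequence satisfying Z_{t+1} ≤ a + b √(max_{0≤i≤t} Z_i) for all t ≥ 0, where a, b ≥ 0. Then for all t ≥ 0, Z_t ≤ max(Z_0, c) where c = ((b + √(b² + 4a))/2)². In particular Z_t ≤ max(Z_0, 2b² + 2a). -/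
/-!
Let `c = ((b + √(b² + 4a)) / 2)²`, so that `√c` is the positive root of `x² = a + b x`.
Then `M ↦ a + b √M` is monotone and satisfies `a + b √M ≤ M` for every `M ≥ c`, so `max (Z 0) c`
is an invariant upper bound for the running maximum. Finally `c ≤ 2b² + 2a` by `(x + y)² ≤ 2x² + 2y²`.
-/

open Finset

theorem le_of_le_map_sup'_range {α : Type*} [LinearOrder α] {f : α → α} (hf : Monotone f)
    {M : α} (hfM : f M ≤ M) {Z : ℕ → α} (h0 : Z 0 ≤ M)
    (hrec : ∀ t, Z (t + 1) ≤ f ((range (t + 1)).sup' nonempty_range_add_one Z)) (t : ℕ) :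
    Z t ≤ M := by
  induction t using Nat.strong_induction_on with
  | _ t ih =>
    cases t with
    | zero => exact h0
    | succ n =>
      have hsup : (range (n + 1)).sup' nonempty_range_add_one Z ≤ M :=
        sup'_le _ _ fun i hi => ih i (mem_range.mp hi)
      exact (hrec n).trans ((hf hsup).trans hfM)

theorem add_mul_sqrt_le_of_root_sq_le {a b M : ℝ} (ha : 0 ≤ a) (hb : 0 ≤ b)
    (hM : ((b + √(b ^ 2 + 4 * a)) / 2) ^ 2 ≤ M) : a + b * √M ≤ M := by
  set d := √(b ^ 2 + 4 * a)
  have hd2 : d ^ 2 = b ^ 2 + 4 * a := Real.sq_sqrt (by positivity)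
  have hroot : (b + d) / 2 ≤ √M := by
    rw [← Real.sqrt_sq (by positivity : 0 ≤ (b + d) / 2)]
    exact Real.sqrt_le_sqrt hM
  have hsqM : √M ^ 2 = M := Real.sq_sqrt ((sq_nonneg _).trans hM)
  nlinarith [Real.sqrt_nonneg M, Real.sqrt_nonneg (b ^ 2 + 4 * a)]

theorem root_sq_le {a b : ℝ} (ha : 0 ≤ a) :
    ((b + √(b ^ 2 + 4 * a)) / 2) ^ 2 ≤ 2 * b ^ 2 + 2 * a := by
  have hd2 : √(b ^ 2 + 4 * a) ^ 2 = b ^ 2 + 4 * a := Real.sq_sqrt (by positivity)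
  nlinarith [sq_nonneg (b - √(b ^ 2 + 4 * a))]

theorem bounded_by_running_max_general (a b : ℝ) (ha : 0 ≤ a) (hb : 0 ≤ b)
    (Z : ℕ → ℝ)
    (hrec : ∀ t, Z (t + 1)
      ≤ a + b * Real.sqrt ((Finset.range (t + 1)).sup' Finset.nonempty_range_add_one Z)) :
    ∀ t, Z t ≤ max (Z 0) (((b + Real.sqrt (b^2 + 4*a)) / 2)^2)
      ∧ Z t ≤ max (Z 0) (2 * b^2 + 2 * a) := by
  intro t
  have hmono : Monotone fun x => a + b * √x := fun x y hxy => by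
    dsimp only
    gcongr
  have hbound : Z t ≤ max (Z 0) (((b + √(b ^ 2 + 4 * a)) / 2) ^ 2) :=
    le_of_le_map_sup'_range hmono (add_mul_sqrt_le_of_root_sq_le ha hb (le_max_right _ _))
      (le_max_left _ _) hrec t
  exact ⟨hbound, hbound.trans (max_le_max le_rfl (root_sq_le ha))⟩

theorem bounded_by_running_max (a b : ℝ) (ha : 0 ≤ a) (hb : 0 ≤ b)
    (Z : ℕ → ℝ) (hZ : ∀ t, 0 ≤ Z t)
    (hrec : ∀ t, Z (t + 1)
      ≤ a + b * Real.sqrt ((Finset.range (t + 1)).sup' Finset.nonempty_range_add_one Z)) :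
    ∀ t, Z t ≤ max (Z 0) (((b + Real.sqrt (b^2 + 4*a)) / 2)^2)
      ∧ Z t ≤ max (Z 0) (2 * b^2 + 2 * a) :=
  bounded_by_running_max_general a b ha hb Z hrec
end

section
/- Let {X_t}_{t=0}^∞ and {P_t}_{t=0}^∞ be nonnegative sequences with P_t ≥ P_{t+1} for all t, and suppose X_{t+1}² ≤ (X_t + X_{t-1})(P_t − P_{t+1}) for all t ≥ 0 (with some convention for X_{-1} ≥ 0). Then for every i ≥ 0, Σ_{j=i}^∞ X_{j+1} ≤ X_i + X_{i-1} + 4 P_i; in particular the series Σ X_j converges. -/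
open Finset

/-!
By AM-GM, `X (t+1) ≤ √((X t + X (t-1)) (P t - P (t+1))) ≤ (X t + X (t-1)) / 4 + (P t - P (t+1))`.
Summing from `i` on, the `P`-increments telescope to at most `P i`, and each of the two sums of
`X` on the right exceeds the tail sum by at most `X i + X (i-1)`. Since they enter with weight
`1/4` each, half of the tail sum is absorbed on the left.
-/

theorem le_div_four_add_of_sq_le_mul {x a d : ℝ} (ha : 0 ≤ a) (hd : 0 ≤ d) (h : x ^ 2 ≤ a * d) :
    x ≤ a / 4 + d :=
  le_of_sq_le_sq (by nlinarith [sq_nonneg (a / 4 - d)]) (by positivity)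

theorem sum_range_add_two_le {X P : ℕ → ℝ} (hX : ∀ t, 0 ≤ X t) (hP : ∀ t, 0 ≤ P t)
    (hstep : ∀ t, X (t + 2) ≤ (X (t + 1) + X t) / 4 + (P t - P (t + 1))) (n : ℕ) :
    ∑ k ∈ range n, X (k + 2) ≤ X 1 + X 0 + 4 * P 0 := by
  set S := ∑ k ∈ range n, X (k + 2)
  have hmono (m m' : ℕ) (h : m ≤ m') : ∑ k ∈ range m, X k ≤ ∑ k ∈ range m', X k :=
    sum_le_sum_of_subset_of_nonneg (range_subset_range.2 h) fun _ _ _ => hX _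
  have hshift₁ : ∑ k ∈ range n, X (k + 1) ≤ X 1 + S :=
    calc ∑ k ∈ range n, X (k + 1)
        = ∑ k ∈ range (n + 1), X k - X 0 := by rw [sum_range_succ']; ring
      _ ≤ ∑ k ∈ range (n + 2), X k - X 0 := sub_le_sub_right (hmono (n + 1) (n + 2) (by omega)) _
      _ = X 1 + S := by rw [sum_range_succ', sum_range_succ']; ring
  have hshift₀ : ∑ k ∈ range n, X k ≤ X 0 + X 1 + S :=
    calc ∑ k ∈ range n, X k
        ≤ ∑ k ∈ range (n + 2), X k := hmono n (n + 2) (by omega)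
      _ = X 0 + X 1 + S := by rw [sum_range_succ', sum_range_succ']; ring
  have hsum : S ≤ (∑ k ∈ range n, X (k + 1) + ∑ k ∈ range n, X k) / 4 + (P 0 - P n) :=
    calc S ≤ ∑ k ∈ range n, ((X (k + 1) + X k) / 4 + (P k - P (k + 1))) :=
          sum_le_sum fun t _ => hstep t
      _ = _ := by rw [sum_add_distrib, ← sum_div, sum_add_distrib, sum_range_sub']
  linarith [hX 0, hP 0, hP n]

theorem sum_range_tail_le {X P : ℕ → ℝ} (hX : ∀ t, 0 ≤ X t) (hP : ∀ t, 0 ≤ P t)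
    (hstep : ∀ t, 1 ≤ t → X (t + 1) ≤ (X t + X (t - 1)) / 4 + (P t - P (t + 1)))
    {i : ℕ} (hi : 1 ≤ i) (n : ℕ) :
    ∑ k ∈ range n, X (i + 1 + k) ≤ X i + X (i - 1) + 4 * P i := by
  have h := sum_range_add_two_le (X := fun k => X (i - 1 + k)) (P := fun k => P (i + k))
    (fun _ => hX _) (fun _ => hP _) (fun t => ?_) n
  · have e : ∀ k, i - 1 + (k + 2) = i + 1 + k := fun k => by omega
    simpa only [e, Nat.sub_add_cancel hi, add_zero] using h
  · have e₂ : i - 1 + (t + 2) = i + t + 1 := by omega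
    have e₁ : i - 1 + (t + 1) = i + t := by omega
    have e₀ : i - 1 + t = i + t - 1 := by omega
    simpa only [e₂, e₁, e₀, add_assoc] using hstep (i + t) (by omega)

theorem finite_length_property (X P : ℕ → ℝ)
    (hX : ∀ t, 0 ≤ X t) (hP : ∀ t, 0 ≤ P t) (hPmono : ∀ t, P (t + 1) ≤ P t)
    (hrec : ∀ t, 1 ≤ t → (X (t + 1))^2 ≤ (X t + X (t - 1)) * (P t - P (t + 1))) :
    Summable X ∧
      ∀ i, 1 ≤ i → (∑' k : ℕ, X (i + 1 + k)) ≤ X i + X (i - 1) + 4 * P i := by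
  have hstep : ∀ t, 1 ≤ t → X (t + 1) ≤ (X t + X (t - 1)) / 4 + (P t - P (t + 1)) :=
    fun t ht => le_div_four_add_of_sq_le_mul (add_nonneg (hX _) (hX _))
      (sub_nonneg.2 (hPmono t)) (hrec t ht)
  have htail := fun i (hi : 1 ≤ i) => sum_range_tail_le hX hP hstep hi
  refine ⟨?_, fun i hi => Real.tsum_le_of_sum_range_le (fun _ => hX _) (htail i hi)⟩
  have h₂ : Summable fun k => X (k + 2) :=
    summable_of_sum_range_le (fun _ => hX _) (by simpa only [add_comm 2] using htail 1 le_rfl)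
  exact (summable_nat_add_iff 2).1 h₂
end

section
/- Let γ > 0, q ≥ 1 an integer, and {X_j}_{j=0}^∞, {P_j}_{j=0}^∞ nonnegative sequences with P_{(j-1)q} ≥ P_{jq} for all j ≥ 1, satisfying X_j² + γ(X_j² − X_{j-1}²) ≤ (P_{(j-1)q} − P_{jq})(X_j − X_{j-1}) for all j ≥ 1. Then for all i ≥ 1, Σ_{j=i}^∞ X_j ≤ 16(γ+1) X_{i-1} + 16(γ+1) P_{(i-1)q}. -/
theorem finite_length_property_spider (γ : ℝ) (hγ : 0 < γ) (q : ℕ) (hq : 1 ≤ q)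
    (X P : ℕ → ℝ) (hX : ∀ j, 0 ≤ X j) (hP : ∀ j, 0 ≤ P j)
    (hPmono : ∀ j, 1 ≤ j → P (j * q) ≤ P ((j - 1) * q))
    (hrec : ∀ j, 1 ≤ j →
      (X j)^2 + γ * ((X j)^2 - (X (j - 1))^2)
        ≤ (P ((j - 1) * q) - P (j * q)) * (X j - X (j - 1))) :
    Summable X ∧
      ∀ i, 1 ≤ i → (∑' k : ℕ, X (i + k))
        ≤ 16 * (γ + 1) * X (i - 1) + 16 * (γ + 1) * P ((i - 1) * q) := by
  have hγ1 : (0:ℝ) < γ + 1 := by linarith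
  set θ : ℝ := Real.sqrt (γ / (γ + 1)) with hθdef
  have hθ0 : 0 ≤ θ := Real.sqrt_nonneg _
  have hθsq : θ ^ 2 = γ / (γ + 1) := Real.sq_sqrt (by positivity)
  have hθsq' : θ ^ 2 * (γ + 1) = γ := by
    rw [hθsq]; field_simp
  have hθ1 : θ ≤ 1 := Real.sqrt_le_one.mpr (by rw [div_le_one hγ1]; linarith)
  have hfac : 1 ≤ 2 * (γ + 1) * (1 - θ) := by nlinarith [hθsq']
  -- key per-step inequality
  have key : ∀ j, 1 ≤ j → X j ≤ θ * X (j - 1) + (P ((j-1)*q) - P (j*q)) := by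
    intro j hj
    have hd : 0 ≤ P ((j-1)*q) - P (j*q) := sub_nonneg.mpr (hPmono j hj)
    have h1 := hrec j hj
    have ha : 0 ≤ X j := hX j
    have hb : 0 ≤ X (j-1) := hX _
    set a := X j
    set b := X (j-1)
    set d := P ((j-1)*q) - P (j*q) with hddef
    have h2 : (1+γ) * a^2 ≤ γ * b^2 + d * a := by nlinarith [mul_nonneg hd hb]
    by_contra hcon
    push_neg at hcon
    have hA : 0 < a := lt_of_le_of_lt (add_nonneg (mul_nonneg hθ0 hb) hd) hcon
    have hsub : 0 < a - θ * b - d := by linarith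
    have hab : 0 < a + θ * b := by nlinarith [mul_nonneg hθ0 hb]
    have hbb : (γ + 1) * (θ * b) ^ 2 = γ * b ^ 2 := by
      linear_combination b ^ 2 * hθsq'
    nlinarith [mul_pos hsub hab, hbb, h2, mul_nonneg hd ha,
      mul_nonneg (mul_nonneg hd hθ0) hb]
  -- partial sum bound
  have sumbd : ∀ i, 1 ≤ i → ∀ n, ∑ k ∈ Finset.range n, X (i + k)
      ≤ 2 * (γ + 1) * (X (i-1) + P ((i-1)*q)) := by
    intro i hi n
    have hterm : ∀ k ∈ Finset.range n, X (i + k)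
        ≤ θ * X (i - 1 + k) + (P ((i-1+k)*q) - P ((i-1+(k+1))*q)) := by
      intro k _
      have h := key (i + k) (by omega)
      have e1 : i + k - 1 = i - 1 + k := by omega
      have e2 : (i + k) * q = (i - 1 + (k+1)) * q := by
        congr 1; omega
      rw [e1, e2] at h
      exact h
    have hS0 : 0 ≤ ∑ k ∈ Finset.range n, X (i + k) :=
      Finset.sum_nonneg fun k _ => hX _
    have hsum1 : ∑ k ∈ Finset.range n, X (i + k)
        ≤ θ * (∑ k ∈ Finset.range n, X (i - 1 + k))
          + (P ((i-1)*q) - P ((i-1+n)*q)) := by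
      calc ∑ k ∈ Finset.range n, X (i + k)
          ≤ ∑ k ∈ Finset.range n,
              (θ * X (i - 1 + k) + (P ((i-1+k)*q) - P ((i-1+(k+1))*q))) :=
            Finset.sum_le_sum hterm
        _ = (∑ k ∈ Finset.range n, θ * X (i - 1 + k))
            + ∑ k ∈ Finset.range n,
              ((fun m => P ((i-1+m)*q)) k - (fun m => P ((i-1+m)*q)) (k+1)) := by
            rw [Finset.sum_add_distrib]
        _ = θ * (∑ k ∈ Finset.range n, X (i - 1 + k))
            + (P ((i-1+0)*q) - P ((i-1+n)*q)) := by
            rw [← Finset.mul_sum, Finset.sum_range_sub']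
        _ = θ * (∑ k ∈ Finset.range n, X (i - 1 + k))
            + (P ((i-1)*q) - P ((i-1+n)*q)) := by norm_num
    have hsum2 : ∑ k ∈ Finset.range n, X (i - 1 + k)
        ≤ X (i-1) + ∑ k ∈ Finset.range n, X (i + k) := by
      have h3 : ∑ k ∈ Finset.range n, X (i - 1 + k)
          ≤ ∑ k ∈ Finset.range (n+1), X (i - 1 + k) := by
        rw [Finset.sum_range_succ]
        have := hX (i - 1 + n)
        linarith
      have h4 : ∑ k ∈ Finset.range (n+1), X (i - 1 + k)
          = (∑ k ∈ Finset.range n, X (i - 1 + (k+1))) + X (i - 1 + 0) :=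
        Finset.sum_range_succ' _ n
      have h5 : ∑ k ∈ Finset.range n, X (i - 1 + (k+1))
          = ∑ k ∈ Finset.range n, X (i + k) := by
        apply Finset.sum_congr rfl
        intro k _
        congr 1
        omega
      rw [h4, h5] at h3
      simpa [add_comm] using h3
    have hPn : 0 ≤ P ((i-1+n)*q) := hP _
    have hXim : 0 ≤ X (i-1) := hX _
    have hPm : 0 ≤ P ((i-1)*q) := hP _
    set S := ∑ k ∈ Finset.range n, X (i + k)
    have hS : (1 - θ) * S ≤ θ * X (i-1) + P ((i-1)*q) := by nlinarith
    nlinarith [mul_nonneg (by nlinarith : (0:ℝ) ≤ 2*(γ+1)*(1-θ) - 1) hS0,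
      mul_le_mul_of_nonneg_left hS (by positivity : (0:ℝ) ≤ 2*(γ+1)),
      mul_nonneg (by positivity : (0:ℝ) ≤ 2*(γ+1)) (mul_nonneg (by linarith : (0:ℝ) ≤ 1 - θ) hXim)]
  have hsummable : Summable X := by
    apply summable_of_sum_range_le (c := X 0 + 2*(γ+1)*(X 0 + P 0)) hX
    intro n
    have h1 : ∑ k ∈ Finset.range n, X k ≤ ∑ k ∈ Finset.range (n+1), X k := by
      rw [Finset.sum_range_succ]; have := hX n; linarith
    have h2 : ∑ k ∈ Finset.range (n+1), X k
        = (∑ k ∈ Finset.range n, X (k+1)) + X 0 := Finset.sum_range_succ' _ n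
    have h3 : ∑ k ∈ Finset.range n, X (k+1) = ∑ k ∈ Finset.range n, X (1+k) := by
      apply Finset.sum_congr rfl; intro k _; congr 1; omega
    have h4 := sumbd 1 le_rfl n
    norm_num at h4
    rw [h2, h3] at h1
    linarith
  refine ⟨hsummable, fun i hi => ?_⟩
  have hsum' : Summable (fun k => X (i + k)) := by
    have := (summable_nat_add_iff i).mpr hsummable
    simpa [add_comm] using this
  apply Summable.tsum_le_of_sum_range_le hsum'
  intro n
  have h := sumbd i hi n
  have hXim : 0 ≤ X (i-1) := hX _
  have hPm : 0 ≤ P ((i-1)*q) := hP _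
  nlinarith
end

section
/- With θ ∈ [0,1), positive vectors v^t ≤ v^{t+1} in ℝⁿ, and σ^t defined recursively by σ^{-1} = θ, σ^t = θ(1 − σ^{t-1}) min_i(v^t_i/v^{t+1}_i): for all t ≥ 0 the componentwise vector inequality (σ^{t-1} − 1) v^t + σ^t v^{t+1} ≤ −(1−θ)² v^t holds. -/
/-- Here `σ (t+1)` plays the role of `σ^t` in the paper, with `σ 0 = σ^{-1} = θ`.
The conclusion is the componentwise inequality
`(σ^{t-1} − 1) v^t + σ^t v^{t+1} ≤ −(1−θ)^2 v^t`. -/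
theorem extrapolation_coeff_vector_ineq {n : ℕ} (hn : 0 < n) (θ : ℝ)
    (hθ0 : 0 ≤ θ) (hθ1 : θ < 1)
    (v : ℕ → Fin n → ℝ) (hvpos : ∀ t i, 0 < v t i)
    (hvmono : ∀ t i, v t i ≤ v (t + 1) i)
    (σ : ℕ → ℝ) (hσ0 : σ 0 = θ)
    (hσ : ∀ t, σ (t + 1)
      = θ * (1 - σ t) *
        (Finset.univ.inf' ⟨⟨0, hn⟩, Finset.mem_univ _⟩ (fun i => v t i / v (t + 1) i))) :
    ∀ t i, (σ t - 1) * v t i + σ (t + 1) * v (t + 1) i ≤ -(1 - θ)^2 * v t i := by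
  have ne : (Finset.univ : Finset (Fin n)).Nonempty := ⟨⟨0, hn⟩, Finset.mem_univ _⟩
  have hm_pos : ∀ t, 0 < Finset.univ.inf' ne (fun i => v t i / v (t + 1) i) := by
    intro t
    rw [Finset.lt_inf'_iff]
    intro i _
    exact div_pos (hvpos t i) (hvpos (t + 1) i)
  have hm_le_one : ∀ t, Finset.univ.inf' ne (fun i => v t i / v (t + 1) i) ≤ 1 := by
    intro t
    refine le_trans (Finset.inf'_le _ (Finset.mem_univ ⟨0, hn⟩)) ?_
    exact div_le_one_of_le₀ (hvmono t _) (hvpos (t + 1) _).le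
  have hσb : ∀ t, 0 ≤ σ t ∧ σ t ≤ θ := by
    intro t
    induction t with
    | zero => exact ⟨hσ0 ▸ hθ0, hσ0.le⟩
    | succ t ih =>
      rw [hσ t]
      have h1 : 0 ≤ 1 - σ t := by linarith [ih.2]
      constructor
      · exact mul_nonneg (mul_nonneg hθ0 h1) (hm_pos t).le
      · calc θ * (1 - σ t) * _ ≤ θ * 1 * 1 :=
              mul_le_mul (mul_le_mul_of_nonneg_left (by linarith [ih.1]) hθ0)
                (hm_le_one t) (hm_pos t).le (by linarith)
          _ = θ := by ring
  intro t i
  have hkey : σ (t + 1) * v (t + 1) i ≤ θ * (1 - σ t) * v t i := by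
    rw [hσ t]
    have hle : Finset.univ.inf' ne (fun j => v t j / v (t + 1) j) ≤ v t i / v (t + 1) i :=
      Finset.inf'_le _ (Finset.mem_univ i)
    have h1 : 0 ≤ θ * (1 - σ t) := mul_nonneg hθ0 (by linarith [(hσb t).2])
    calc θ * (1 - σ t) * _ * v (t + 1) i
        ≤ θ * (1 - σ t) * (v t i / v (t + 1) i) * v (t + 1) i := by
          apply mul_le_mul_of_nonneg_right (mul_le_mul_of_nonneg_left hle h1)
            (hvpos (t + 1) i).le
      _ = θ * (1 - σ t) * v t i := by
          rw [mul_assoc, div_mul_cancel₀ _ (hvpos (t + 1) i).ne']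
  have hσθ := (hσb t).2
  have hvt := (hvpos t i).le
  nlinarith [mul_le_mul_of_nonneg_right hσθ hvt]
end

section
/- Let v^0 = v̲·1 with v̲ > 0, let α > 0, β ≥ 0, and let {r^t} ⊂ ℝⁿ. Define v^{t+1} = √(v^0 ⊙ v^0 + Σ_{i=0}^t (α‖r^i‖² · 1 + β r^i ⊙ r^i)) (componentwise square root and product). Then for all t ≥ 0: √(v̲² + α R_t) ≤ v^{t+1}_j ≤ √(v̲² + (α+β) R_t) for every coordinate j, where R_t = Σ_{i=0}^t ‖r^i‖²; consequently max_j v^{t+1}_j / min_j v^{t+1}_j ≤ 1 + √(β/α). -/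
/-!
Each coordinate satisfies `v^{t+1}_j ^ 2 = v̲² + α R_t + β Σ_i (r^i_j)²`, and
`0 ≤ Σ_i (r^i_j)² ≤ R_t` gives the two-sided bound. For the ratio,
`v̲² + (α + β) R_t ≤ (1 + √(β/α))² (v̲² + α R_t)` because `(√(β/α))² α = β`, so the largest
coordinate is at most `1 + √(β/α)` times the smallest.
-/

open Finset

section SumBounds

variable {ι κ : Type*} [Fintype κ] (s : Finset ι) (α β : ℝ) (r : ι → κ → ℝ)

theorem mul_sum_sum_sq_le_sum_add_mul_sq (hβ : 0 ≤ β) (j : κ) :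
    α * ∑ i ∈ s, ∑ k, r i k ^ 2 ≤ ∑ i ∈ s, (α * ∑ k, r i k ^ 2 + β * r i j ^ 2) := by
  rw [mul_sum]
  gcongr with i
  exact le_add_of_nonneg_right (by positivity)

theorem sum_add_mul_sq_le_add_mul_sum_sum_sq (hβ : 0 ≤ β) (j : κ) :
    ∑ i ∈ s, (α * ∑ k, r i k ^ 2 + β * r i j ^ 2) ≤ (α + β) * ∑ i ∈ s, ∑ k, r i k ^ 2 := by
  rw [mul_sum]
  gcongr with i
  have hj : r i j ^ 2 ≤ ∑ k, r i k ^ 2 :=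
    single_le_sum (fun k _ ↦ sq_nonneg (r i k)) (mem_univ j)
  nlinarith

end SumBounds

theorem add_add_mul_le_sq_one_add_sqrt_div_mul {α β a R : ℝ} (hα : 0 < α) (hβ : 0 ≤ β)
    (ha : 0 ≤ a) (hR : 0 ≤ R) :
    a + (α + β) * R ≤ (1 + √(β / α)) ^ 2 * (a + α * R) := by
  have hs : √(β / α) ^ 2 * α = β := by
    rw [Real.sq_sqrt (div_nonneg hβ hα.le), div_mul_cancel₀ β hα.ne']
  have hcross : 0 ≤ √(β / α) * (a + α * R) := by positivity
  nlinarith [mul_nonneg (sq_nonneg √(β / α)) ha]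

theorem div_le_of_le_sqrt_of_sqrt_le {x y A B c : ℝ} (hx : x ≤ √B) (hy : √A ≤ y)
    (hBA : B ≤ c ^ 2 * A) (hc : 0 ≤ c) : x / y ≤ c := by
  rcases (Real.sqrt_nonneg A |>.trans hy).eq_or_lt with hy0 | hy0
  · rw [← hy0, div_zero]
    exact hc
  rw [div_le_iff₀ hy0]
  calc x ≤ √B := hx
    _ ≤ √(c ^ 2 * A) := Real.sqrt_le_sqrt hBA
    _ = c * √A := by rw [Real.sqrt_mul (sq_nonneg c), Real.sqrt_sq hc]
    _ ≤ c * y := mul_le_mul_of_nonneg_left hy hc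

theorem stepsize_vector_bounds_general {n : ℕ}
    (vb α β : ℝ) (hα : 0 < α) (hβ : 0 ≤ β)
    (r : ℕ → Fin n → ℝ) (v : ℕ → Fin n → ℝ)
    (hv : ∀ t j, v (t + 1) j
      = Real.sqrt (vb^2 + ∑ i ∈ Finset.range (t + 1),
          (α * (∑ k, (r i k)^2) + β * (r i j)^2))) :
    ∀ t,
      (∀ j, Real.sqrt (vb^2 + α * ∑ i ∈ Finset.range (t + 1), ∑ k, (r i k)^2)
              ≤ v (t + 1) j
            ∧ v (t + 1) j
              ≤ Real.sqrt (vb^2 + (α + β) * ∑ i ∈ Finset.range (t + 1), ∑ k, (r i k)^2))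
      ∧ (∀ j j', v (t + 1) j / v (t + 1) j' ≤ 1 + Real.sqrt (β / α)) := by
  intro t
  have hlow : ∀ j, √(vb ^ 2 + α * ∑ i ∈ range (t + 1), ∑ k, r i k ^ 2) ≤ v (t + 1) j :=
    fun j ↦ (hv t j).symm ▸ Real.sqrt_le_sqrt
      (add_le_add_right (mul_sum_sum_sq_le_sum_add_mul_sq _ α β r hβ j) _)
  have hhigh : ∀ j, v (t + 1) j ≤ √(vb ^ 2 + (α + β) * ∑ i ∈ range (t + 1), ∑ k, r i k ^ 2) :=
    fun j ↦ (hv t j).symm ▸ Real.sqrt_le_sqrt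
      (add_le_add_right (sum_add_mul_sq_le_add_mul_sum_sum_sq _ α β r hβ j) _)
  refine ⟨fun j ↦ ⟨hlow j, hhigh j⟩, fun j j' ↦ ?_⟩
  exact div_le_of_le_sqrt_of_sqrt_le (hhigh j) (hlow j')
    (add_add_mul_le_sq_one_add_sqrt_div_mul hα hβ (sq_nonneg vb) (by positivity))
    (by positivity)

theorem stepsize_vector_bounds {n : ℕ} (hn : 0 < n)
    (vb α β : ℝ) (hvb : 0 < vb) (hα : 0 < α) (hβ : 0 ≤ β)
    (r : ℕ → Fin n → ℝ) (v : ℕ → Fin n → ℝ)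
    (hv0 : ∀ j, v 0 j = vb)
    (hv : ∀ t j, v (t + 1) j
      = Real.sqrt (vb^2 + ∑ i ∈ Finset.range (t + 1),
          (α * (∑ k, (r i k)^2) + β * (r i j)^2))) :
    ∀ t,
      (∀ j, Real.sqrt (vb^2 + α * ∑ i ∈ Finset.range (t + 1), ∑ k, (r i k)^2)
              ≤ v (t + 1) j
            ∧ v (t + 1) j
              ≤ Real.sqrt (vb^2 + (α + β) * ∑ i ∈ Finset.range (t + 1), ∑ k, (r i k)^2))
      ∧ (∀ j j', v (t + 1) j / v (t + 1) j' ≤ 1 + Real.sqrt (β / α)) :=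
  stepsize_vector_bounds_general vb α β hα hβ r v hv
end
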